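/- Let L₀ψ = ψ'' + F'(w)ψ with F(u) = u - u³ and w = tanh(z/√2). Then there exists γ > 0 such that for every ψ ∈ H¹(ℝ) with ∫_ℝ ψ w' dt = 0, one has ∫_ℝ ( |ψ'|² - F'(w)ψ² ) dt ≥ γ ∫_ℝ ( |ψ'|² + ψ² ) dt. -/

import Mathlib

/-!
Write `w = tanh (z/√2)`, so that `w' = (1 - w²)/√2 > 0` and `w'' = -√2 w w'`. With
`A ψ = ψ' + √2 w ψ` one has `-L₀ = A*A`, i.e. `∫ (ψ'² - F'(w)ψ²) = ∫ (Aψ)²`.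

If `ψ ⊥ w'`, then `k = (∫_{-∞}^z ψ w') / w'` solves `k' - √2 w k = ψ`, i.e. `ψ = -A*k`.
By orthogonality the numerator is also minus the integral over `(z, ∞)`; since
`∫_z^∞ w'² ≤ w'(z)²` when `w(z) ≥ 0` and `∫_{-∞}^z w'² ≤ w'(z)²` when `w(z) ≤ 0`,
Cauchy–Schwarz gives `k² ≤ ‖ψ‖²` pointwise. The identity `ψ² = k'² + (1 + w²) k² - (√2 w k²)'` then gives `‖k‖² ≤ 4 ‖ψ‖²`,
and `‖ψ‖² = -⟨Aψ, k⟩ ≤ 2 ‖Aψ‖² + ‖k‖²/8` gives `‖ψ‖² ≤ 4 ‖Aψ‖²`. Finally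
`ψ'² + ψ² ≤ (ψ'² - F'(w)ψ²) + 2ψ²`, so `γ = 1/9` works.
-/

open Real MeasureTheory Set Filter

theorem Real.hasDerivAt_tanh (x : ℝ) : HasDerivAt tanh (1 - tanh x ^ 2) x := by
  have h := (hasDerivAt_sinh x).div (hasDerivAt_cosh x) (cosh_pos x).ne'
  rw [show tanh = fun y => sinh y / cosh y from funext tanh_eq_sinh_div_cosh]
  refine h.congr_deriv ?_
  show _ = 1 - (sinh x / cosh x) ^ 2
  field_simp

theorem sq_integral_mul_le {α : Type*} [MeasurableSpace α] {μ : Measure α} {f g : α → ℝ}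
    (hf : MemLp f 2 μ) (hg : MemLp g 2 μ) :
    (∫ x, f x * g x ∂μ) ^ 2 ≤ (∫ x, f x ^ 2 ∂μ) * ∫ x, g x ^ 2 ∂μ := by
  have hfg : Integrable (fun x => f x * g x) μ := hf.integrable_mul hg
  have hquad : ∀ t : ℝ, 0 ≤ (∫ x, f x ^ 2 ∂μ) * (t * t) + 2 * (∫ x, f x * g x ∂μ) * t
      + ∫ x, g x ^ 2 ∂μ := by
    intro t
    have hexp : ∫ x, (t * f x + g x) ^ 2 ∂μ = (∫ x, f x ^ 2 ∂μ) * (t * t)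
        + 2 * (∫ x, f x * g x ∂μ) * t + ∫ x, g x ^ 2 ∂μ := by
      have e : (fun x => (t * f x + g x) ^ 2)
          = fun x => (t * t) * f x ^ 2 + ((2 * t) * (f x * g x) + g x ^ 2) := by
        funext x; ring
      have hrest : Integrable (fun x => (2 * t) * (f x * g x) + g x ^ 2) μ :=
        (hfg.const_mul _).add hg.integrable_sq
      rw [e, integral_add (hf.integrable_sq.const_mul _) hrest,
        integral_add (hfg.const_mul _) hg.integrable_sq, integral_const_mul, integral_const_mul]
      ring
    rw [← hexp]
    exact integral_nonneg fun x => sq_nonneg _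
  have := discrim_le_zero hquad
  rw [discrim] at this
  linarith

theorem hasDerivAt_integral_Iic {f : ℝ → ℝ} (hf : Continuous f) (hfi : Integrable f) (x : ℝ) :
    HasDerivAt (fun y => ∫ t in Iic y, f t) (f x) x := by
  have hsplit : (fun y => ∫ t in Iic y, f t) = fun y => (∫ t in Iic 0, f t) + ∫ t in 0..y, f t := by
    funext y
    rw [← intervalIntegral.integral_Iic_sub_Iic hfi.integrableOn hfi.integrableOn]
    ring
  rw [hsplit]
  exact (intervalIntegral.integral_hasDerivAt_right (hf.intervalIntegrable _ _)
    (hf.stronglyMeasurableAtFilter _ _) hf.continuousAt).const_add _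

lemma sq_sqrt_two : √2 ^ 2 = 2 := sq_sqrt zero_le_two

noncomputable section

def kink (z : ℝ) : ℝ := tanh (z / √2)

def kinkDeriv (z : ℝ) : ℝ := (1 - kink z ^ 2) / √2

def kinkTail (u : ℝ) : ℝ := (u - u ^ 3 / 3) / √2

lemma abs_kink_lt_one (z : ℝ) : |kink z| < 1 := abs_tanh_lt_one _

lemma sq_kink_lt_one (z : ℝ) : kink z ^ 2 < 1 := by
  simpa using pow_lt_one₀ (abs_nonneg _) (abs_kink_lt_one z) two_ne_zero

lemma kinkDeriv_pos (z : ℝ) : 0 < kinkDeriv z :=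
  div_pos (by linarith [sq_kink_lt_one z]) (by positivity)

lemma sqrt_two_mul_kinkDeriv (z : ℝ) : √2 * kinkDeriv z = 1 - kink z ^ 2 := by
  rw [kinkDeriv, mul_div_cancel₀ _ (by positivity)]

lemma abs_sqrt_two_mul_kink_le (z : ℝ) : |√2 * kink z| ≤ 3 / 2 := by
  rw [abs_mul, abs_of_pos (by positivity : (0 : ℝ) < √2)]
  nlinarith [abs_kink_lt_one z, abs_nonneg (kink z), sq_sqrt_two, sqrt_nonneg 2]

lemma hasDerivAt_kink (z : ℝ) : HasDerivAt kink (kinkDeriv z) z := by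
  have h := (hasDerivAt_tanh (z / √2)).comp z ((hasDerivAt_id z).div_const √2)
  exact h.congr_deriv (by simp [kinkDeriv, kink, div_eq_mul_inv])

@[fun_prop]
lemma continuous_kink : Continuous kink :=
  continuous_iff_continuousAt.2 fun z => (hasDerivAt_kink z).continuousAt

lemma hasDerivAt_kinkDeriv (z : ℝ) :
    HasDerivAt kinkDeriv (-(√2 * kink z * kinkDeriv z)) z := by
  have h := (((hasDerivAt_kink z).pow 2).const_sub 1).div_const √2
  refine h.congr_deriv ?_
  have : (√2 : ℝ) ≠ 0 := by positivity
  field_simp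
  linear_combination (kink z * kinkDeriv z) * sq_sqrt_two

@[fun_prop]
lemma continuous_kinkDeriv : Continuous kinkDeriv :=
  continuous_iff_continuousAt.2 fun z => (hasDerivAt_kinkDeriv z).continuousAt

lemma hasDerivAt_kinkTail_comp_kink (z : ℝ) :
    HasDerivAt (fun y => kinkTail (kink y)) (kinkDeriv z ^ 2) z := by
  have h := ((hasDerivAt_kink z).sub (((hasDerivAt_kink z).pow 3).div_const 3)).div_const √2
  refine h.congr_deriv ?_
  simp only [kinkDeriv]
  ring

lemma intervalIntegral_kinkDeriv_sq (a b : ℝ) :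
    ∫ t in a..b, kinkDeriv t ^ 2 = kinkTail (kink b) - kinkTail (kink a) :=
  intervalIntegral.integral_eq_sub_of_hasDerivAt (fun z _ => hasDerivAt_kinkTail_comp_kink z)
    ((continuous_kinkDeriv.pow 2).intervalIntegrable a b)

lemma abs_kinkTail_le {u : ℝ} (hu : |u| ≤ 1) : |kinkTail u| ≤ 1 := by
  have hs := one_lt_sqrt_two
  obtain ⟨hu₁, hu₂⟩ := abs_le.1 hu
  rw [kinkTail, abs_div, abs_of_pos (by positivity : (0 : ℝ) < √2), div_le_one (by positivity),
    abs_le]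
  constructor <;> nlinarith [mul_nonneg (sub_nonneg.2 hu₂) (neg_le_iff_add_nonneg.1 hu₁)]

lemma integrable_kinkDeriv_sq : Integrable fun t => kinkDeriv t ^ 2 := by
  refine integrable_of_intervalIntegral_norm_bounded 2
    (fun n => (continuous_kinkDeriv.pow 2).integrableOn_Ioc) tendsto_neg_atTop_atBot tendsto_id
    (Eventually.of_forall fun n => ?_)
  simp only [norm_pow, Real.norm_eq_abs, sq_abs, id]
  rw [intervalIntegral_kinkDeriv_sq]
  have h1 := abs_kinkTail_le (abs_kink_lt_one n).le
  have h2 := abs_kinkTail_le (abs_kink_lt_one (-n)).le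
  linarith [abs_le.1 h1, abs_le.1 h2]

lemma memLp_kinkDeriv : MemLp kinkDeriv 2 volume :=
  (memLp_two_iff_integrable_sq continuous_kinkDeriv.aestronglyMeasurable).2 integrable_kinkDeriv_sq

lemma kinkTail_neg (u : ℝ) : kinkTail (-u) = -kinkTail u := by
  simp only [kinkTail]; ring

lemma kinkTail_sub_kinkTail_le {u v : ℝ} (hu : 0 ≤ u) (hv : |v| ≤ 1) :
    kinkTail v - kinkTail u ≤ ((1 - u ^ 2) / √2) ^ 2 := by
  have hs : 7 / 5 ≤ √2 := by nlinarith [sq_sqrt_two, sqrt_nonneg 2]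
  obtain ⟨hv₁, hv₂⟩ := abs_le.1 hv
  have hcoef : 0 ≤ 3 * √2 * (1 + u) ^ 2 - 2 * (2 + u) := by nlinarith
  rw [div_pow, sq_sqrt_two, kinkTail, kinkTail, ← sub_div,
    div_le_div_iff₀ (by positivity) two_pos]
  nlinarith [mul_nonneg (sq_nonneg (1 - v)) (by linarith : (0 : ℝ) ≤ 2 + v),
    mul_nonneg (sq_nonneg (1 - u)) hcoef, sq_sqrt_two]

lemma setIntegral_Ioi_kinkDeriv_sq_le {x : ℝ} (hx : 0 ≤ kink x) :
    ∫ t in Ioi x, kinkDeriv t ^ 2 ≤ kinkDeriv x ^ 2 := by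
  refine le_of_tendsto' (intervalIntegral_tendsto_integral_Ioi x
    integrable_kinkDeriv_sq.integrableOn tendsto_id) fun R => ?_
  rw [id, intervalIntegral_kinkDeriv_sq]
  exact kinkTail_sub_kinkTail_le hx (abs_kink_lt_one R).le

lemma setIntegral_Iic_kinkDeriv_sq_le {x : ℝ} (hx : kink x ≤ 0) :
    ∫ t in Iic x, kinkDeriv t ^ 2 ≤ kinkDeriv x ^ 2 := by
  refine le_of_tendsto' (intervalIntegral_tendsto_integral_Iic x
    integrable_kinkDeriv_sq.integrableOn tendsto_id) fun L => ?_
  rw [id, intervalIntegral_kinkDeriv_sq]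
  have h := kinkTail_sub_kinkTail_le (neg_nonneg.2 hx) (abs_neg (kink L) ▸ (abs_kink_lt_one L).le)
  rw [kinkTail_neg, kinkTail_neg, neg_sq] at h
  simpa only [kinkDeriv, sub_neg_eq_add, neg_add_eq_sub] using h

section Factorization

variable {ψ : ℝ → ℝ}

-- `kinkFactor ψ = Aψ` and `adjointPreimage ψ = k` in the notation of the header.
def kinkFactor (ψ : ℝ → ℝ) (x : ℝ) : ℝ := deriv ψ x + √2 * kink x * ψ x

def kinkPrimitive (ψ : ℝ → ℝ) (x : ℝ) : ℝ := ∫ t in Iic x, ψ t * kinkDeriv t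

def adjointPreimage (ψ : ℝ → ℝ) (x : ℝ) : ℝ := kinkPrimitive ψ x / kinkDeriv x

lemma memLp_kinkFactor (hψ : MemLp ψ 2 volume) (hψ' : MemLp (deriv ψ) 2 volume) :
    MemLp (kinkFactor ψ) 2 volume := by
  have hpot : MemLp (fun x => √2 * kink x * ψ x) 2 volume :=
    hψ.of_le_mul (c := 3 / 2) ((continuous_const.mul continuous_kink).aestronglyMeasurable.mul
      hψ.aestronglyMeasurable) (ae_of_all _ fun x => by
        rw [norm_mul, Real.norm_eq_abs, Real.norm_eq_abs]
        exact mul_le_mul_of_nonneg_right (abs_sqrt_two_mul_kink_le x) (abs_nonneg _))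
  exact hψ'.add hpot

lemma sq_kinkPrimitive_le (hψ : MemLp ψ 2 volume) (horth : ∫ t, ψ t * kinkDeriv t = 0) (x : ℝ) :
    kinkPrimitive ψ x ^ 2 ≤ (∫ t, ψ t ^ 2) * kinkDeriv x ^ 2 := by
  have tail_bound : ∀ s : Set ℝ, ∫ t in s, kinkDeriv t ^ 2 ≤ kinkDeriv x ^ 2 →
      (∫ t in s, ψ t * kinkDeriv t) ^ 2 ≤ (∫ t, ψ t ^ 2) * kinkDeriv x ^ 2 := fun s hs =>
    (sq_integral_mul_le (hψ.restrict s) (memLp_kinkDeriv.restrict s)).trans <|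
      mul_le_mul (setIntegral_le_integral hψ.integrable_sq (ae_of_all _ fun t => sq_nonneg _)) hs
        (integral_nonneg fun t => sq_nonneg _) (integral_nonneg fun t => sq_nonneg _)
  rcases le_total 0 (kink x) with hx | hx
  · have hint := hψ.integrable_mul memLp_kinkDeriv
    have hsplit :=
      intervalIntegral.integral_Iic_add_Ioi (b := x) hint.integrableOn hint.integrableOn
    have hright : kinkPrimitive ψ x = -∫ t in Ioi x, ψ t * kinkDeriv t := by
      rw [kinkPrimitive]
      simp only [Pi.mul_apply] at hsplit
      linarith
    rw [hright, neg_sq]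
    exact tail_bound _ (setIntegral_Ioi_kinkDeriv_sq_le hx)
  · exact tail_bound _ (setIntegral_Iic_kinkDeriv_sq_le hx)

lemma sq_adjointPreimage_le (hψ : MemLp ψ 2 volume) (horth : ∫ t, ψ t * kinkDeriv t = 0)
    (x : ℝ) : adjointPreimage ψ x ^ 2 ≤ ∫ t, ψ t ^ 2 := by
  rw [adjointPreimage, div_pow, div_le_iff₀ (pow_pos (kinkDeriv_pos x) 2)]
  exact sq_kinkPrimitive_le hψ horth x

lemma hasDerivAt_adjointPreimage (hψc : Continuous ψ) (hψ : MemLp ψ 2 volume) (x : ℝ) :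
    HasDerivAt (adjointPreimage ψ) (ψ x + √2 * kink x * adjointPreimage ψ x) x := by
  have h := (hasDerivAt_integral_Iic (hψc.mul continuous_kinkDeriv)
    (hψ.integrable_mul memLp_kinkDeriv) x).div (hasDerivAt_kinkDeriv x) (kinkDeriv_pos x).ne'
  refine h.congr_deriv ?_
  have := (kinkDeriv_pos x).ne'
  simp only [adjointPreimage, kinkPrimitive, Pi.mul_apply]
  field_simp
  ring

lemma continuous_adjointPreimage (hψc : Continuous ψ) (hψ : MemLp ψ 2 volume) :
    Continuous (adjointPreimage ψ) :=
  continuous_iff_continuousAt.2 fun x => (hasDerivAt_adjointPreimage hψc hψ x).continuousAt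


lemma intervalIntegral_sq_adjointPreimage_le (hψc : Continuous ψ) (hψ : MemLp ψ 2 volume)
    (horth : ∫ t, ψ t * kinkDeriv t = 0) {a b : ℝ} (hab : a ≤ b) :
    ∫ t in a..b, adjointPreimage ψ t ^ 2 ≤ 4 * ∫ t, ψ t ^ 2 := by
  set k := adjointPreimage ψ
  set N := ∫ t, ψ t ^ 2
  have hk := continuous_adjointPreimage hψc hψ
  set F' := fun t =>
    √2 * kinkDeriv t * k t ^ 2 + √2 * kink t * (2 * k t * (ψ t + √2 * kink t * k t))
  have hF : ∀ t, HasDerivAt (fun t => √2 * kink t * k t ^ 2) (F' t) t := fun t =>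
    (((hasDerivAt_kink t).const_mul √2).mul
      ((hasDerivAt_adjointPreimage hψc hψ t).pow 2)).congr_deriv
        (by simp only [F', Pi.pow_apply]; ring)
  -- with `k' = ψ + √2 w k`: `ψ² + F' = k'² + (1 + w²) k²`
  have hpt : ∀ t, k t ^ 2 ≤ ψ t ^ 2 + F' t := fun t => by
    nlinarith [sq_nonneg (ψ t + √2 * kink t * k t), sq_nonneg (kink t * k t),
      sqrt_two_mul_kinkDeriv t, sq_sqrt_two]
  have hF'c : Continuous F' := by
    simp only [F']
    fun_prop
  have hbdry : ∀ t, |√2 * kink t * k t ^ 2| ≤ 3 / 2 * N := fun t => by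
    rw [abs_mul (√2 * kink t), abs_of_nonneg (sq_nonneg (k t))]
    exact mul_le_mul (abs_sqrt_two_mul_kink_le t) (sq_adjointPreimage_le hψ horth t)
      (sq_nonneg _) (by norm_num)
  have hψI : ∫ t in a..b, ψ t ^ 2 ≤ N := by
    rw [intervalIntegral.integral_of_le hab]
    exact setIntegral_le_integral hψ.integrable_sq (ae_of_all _ fun t => sq_nonneg _)
  calc ∫ t in a..b, k t ^ 2 ≤ ∫ t in a..b, (ψ t ^ 2 + F' t) :=
        intervalIntegral.integral_mono_on hab ((hk.pow 2).intervalIntegrable _ _)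
          (((hψc.pow 2).add hF'c).intervalIntegrable _ _) fun t _ => hpt t
    _ = (∫ t in a..b, ψ t ^ 2) + (√2 * kink b * k b ^ 2 - √2 * kink a * k a ^ 2) := by
        rw [intervalIntegral.integral_add (f := fun t => ψ t ^ 2)
          ((hψc.pow 2).intervalIntegrable _ _) (hF'c.intervalIntegrable _ _),
          intervalIntegral.integral_eq_sub_of_hasDerivAt (fun t _ => hF t)
          (hF'c.intervalIntegrable _ _)]
    _ ≤ 4 * N := by
        linarith [abs_le.1 (hbdry a), abs_le.1 (hbdry b)]

lemma integrable_sq_adjointPreimage (hψc : Continuous ψ) (hψ : MemLp ψ 2 volume)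
    (horth : ∫ t, ψ t * kinkDeriv t = 0) : Integrable fun t => adjointPreimage ψ t ^ 2 := by
  refine integrable_of_intervalIntegral_norm_bounded (4 * ∫ t, ψ t ^ 2)
    (fun n => ((continuous_adjointPreimage hψc hψ).pow 2).integrableOn_Ioc)
    tendsto_neg_atTop_atBot tendsto_id ?_
  filter_upwards [eventually_ge_atTop 0] with n hn
  simp only [norm_pow, Real.norm_eq_abs, sq_abs, id]
  exact intervalIntegral_sq_adjointPreimage_le hψc hψ horth (by linarith)

lemma integral_sq_adjointPreimage_le (hψc : Continuous ψ) (hψ : MemLp ψ 2 volume)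
    (horth : ∫ t, ψ t * kinkDeriv t = 0) :
    ∫ t, adjointPreimage ψ t ^ 2 ≤ 4 * ∫ t, ψ t ^ 2 := by
  refine le_of_tendsto (intervalIntegral_tendsto_integral
    (integrable_sq_adjointPreimage hψc hψ horth) tendsto_neg_atTop_atBot tendsto_id) ?_
  filter_upwards [eventually_ge_atTop 0] with n hn
  exact intervalIntegral_sq_adjointPreimage_le hψc hψ horth (by simp only [id]; linarith)

lemma memLp_adjointPreimage (hψc : Continuous ψ) (hψ : MemLp ψ 2 volume)
    (horth : ∫ t, ψ t * kinkDeriv t = 0) : MemLp (adjointPreimage ψ) 2 volume :=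
  (memLp_two_iff_integrable_sq (continuous_adjointPreimage hψc hψ).aestronglyMeasurable).2
    (integrable_sq_adjointPreimage hψc hψ horth)

lemma integrable_kinkQuadForm (hψ : MemLp ψ 2 volume) (hψ' : MemLp (deriv ψ) 2 volume) :
    Integrable fun t => deriv ψ t ^ 2 - (1 - 3 * kink t ^ 2) * ψ t ^ 2 := by
  refine hψ'.integrable_sq.sub (hψ.integrable_sq.bdd_mul (c := 2)
    (by fun_prop) (ae_of_all _ fun t => ?_))
  have := sq_kink_lt_one t
  rw [Real.norm_eq_abs, abs_le]
  constructor <;> nlinarith [sq_nonneg (kink t)]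

lemma integral_kinkQuadForm_eq (hψd : Differentiable ℝ ψ) (hψ : MemLp ψ 2 volume)
    (hψ' : MemLp (deriv ψ) 2 volume) :
    ∫ t, (deriv ψ t ^ 2 - (1 - 3 * kink t ^ 2) * ψ t ^ 2) = ∫ t, kinkFactor ψ t ^ 2 := by
  set D := fun t => √2 * kinkDeriv t * ψ t ^ 2 + √2 * kink t * (2 * ψ t * deriv ψ t)
  have hD : ∀ t, HasDerivAt (fun t => √2 * kink t * ψ t ^ 2) (D t) t := fun t =>
    (((hasDerivAt_kink t).const_mul √2).mul ((hψd t).hasDerivAt.pow 2)).congr_deriv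
      (by simp only [D, Pi.pow_apply]; ring)
  have hpt : ∀ t, deriv ψ t ^ 2 - (1 - 3 * kink t ^ 2) * ψ t ^ 2 = kinkFactor ψ t ^ 2 - D t :=
    fun t => by
      simp only [kinkFactor, D]
      linear_combination (ψ t ^ 2) * sqrt_two_mul_kinkDeriv t - (kink t * ψ t) ^ 2 * sq_sqrt_two
  have hA := (memLp_kinkFactor hψ hψ').integrable_sq
  have hDi : Integrable D :=
    (hA.sub (integrable_kinkQuadForm hψ hψ')).congr (ae_of_all _ fun t => by
      simp only [Pi.sub_apply, hpt]; ring)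
  have hpotential : Integrable fun t => √2 * kink t * ψ t ^ 2 :=
    hψ.integrable_sq.bdd_mul (c := 3 / 2) (by fun_prop)
      (ae_of_all _ fun t => abs_sqrt_two_mul_kink_le t)
  rw [integral_congr_ae (ae_of_all _ hpt), integral_sub hA hDi,
    integral_eq_zero_of_hasDerivAt_of_integrable hD hDi hpotential, sub_zero]

lemma integral_sq_eq_neg_integral_kinkFactor_mul (hψd : Differentiable ℝ ψ)
    (hψ : MemLp ψ 2 volume) (hψ' : MemLp (deriv ψ) 2 volume)
    (horth : ∫ t, ψ t * kinkDeriv t = 0) :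
    ∫ t, ψ t ^ 2 = -∫ t, kinkFactor ψ t * adjointPreimage ψ t := by
  have hk := memLp_adjointPreimage hψd.continuous hψ horth
  have hderiv : ∀ t, HasDerivAt (fun t => ψ t * adjointPreimage ψ t)
      (ψ t ^ 2 + kinkFactor ψ t * adjointPreimage ψ t) t := fun t =>
    ((hψd t).hasDerivAt.mul (hasDerivAt_adjointPreimage hψd.continuous hψ t)).congr_deriv
      (by simp only [kinkFactor]; ring)
  have hAk : Integrable fun t => kinkFactor ψ t * adjointPreimage ψ t :=
    (memLp_kinkFactor hψ hψ').integrable_mul hk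
  have h0 := integral_eq_zero_of_hasDerivAt_of_integrable hderiv
    (hψ.integrable_sq.add hAk) (hψ.integrable_mul hk)
  rw [integral_add hψ.integrable_sq hAk] at h0
  linarith

lemma integral_sq_le_four_mul_integral_kinkFactor_sq (hψd : Differentiable ℝ ψ)
    (hψ : MemLp ψ 2 volume) (hψ' : MemLp (deriv ψ) 2 volume)
    (horth : ∫ t, ψ t * kinkDeriv t = 0) :
    ∫ t, ψ t ^ 2 ≤ 4 * ∫ t, kinkFactor ψ t ^ 2 := by
  have hA := (memLp_kinkFactor hψ hψ').integrable_sq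
  have hk := integrable_sq_adjointPreimage hψd.continuous hψ horth
  have hAk : Integrable fun t => kinkFactor ψ t * adjointPreimage ψ t :=
    (memLp_kinkFactor hψ hψ').integrable_mul (memLp_adjointPreimage hψd.continuous hψ horth)
  have hmono : ∫ t, -(kinkFactor ψ t * adjointPreimage ψ t)
      ≤ ∫ t, (2 * kinkFactor ψ t ^ 2 + adjointPreimage ψ t ^ 2 / 8) :=
    integral_mono hAk.neg ((hA.const_mul 2).add (hk.div_const 8)) fun t => by
      nlinarith [sq_nonneg (4 * kinkFactor ψ t + adjointPreimage ψ t)]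
  rw [integral_neg, integral_add (hA.const_mul 2) (hk.div_const 8), integral_const_mul,
    integral_div, ← integral_sq_eq_neg_integral_kinkFactor_mul hψd hψ hψ' horth] at hmono
  linarith [integral_sq_adjointPreimage_le hψd.continuous hψ horth]

end Factorization

end

/-- Coercivity of the linearized Allen-Cahn quadratic form on the orthogonal
complement of `w'`: there is `γ > 0` such that for every `ψ ∈ H¹(ℝ)` with
`∫ ψ w' = 0` one has `∫ (|ψ'|² - F'(w)ψ²) ≥ γ ∫ (|ψ'|² + ψ²)`, where
`F'(w) = 1 - 3w²` and `w = tanh(z/√2)`. -/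
theorem stmt_7 :
    letI w : ℝ → ℝ := fun z => Real.tanh (z / Real.sqrt 2)
    ∃ γ : ℝ, 0 < γ ∧
      ∀ ψ : ℝ → ℝ, Differentiable ℝ ψ →
        MeasureTheory.MemLp ψ 2 (MeasureTheory.volume) →
        MeasureTheory.MemLp (deriv ψ) 2 (MeasureTheory.volume) →
        (∫ t : ℝ, ψ t * deriv w t) = 0 →
        γ * ∫ t : ℝ, ((deriv ψ t) ^ 2 + (ψ t) ^ 2)
          ≤ ∫ t : ℝ, ((deriv ψ t) ^ 2 - (1 - 3 * (w t) ^ 2) * (ψ t) ^ 2) := by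
  refine ⟨1 / 9, by norm_num, fun ψ hψd hψ hψ' horth => ?_⟩
  change ∫ t, ψ t * deriv kink t = 0 at horth
  change 1 / 9 * ∫ t, (deriv ψ t ^ 2 + ψ t ^ 2)
    ≤ ∫ t, (deriv ψ t ^ 2 - (1 - 3 * kink t ^ 2) * ψ t ^ 2)
  rw [funext fun t => (hasDerivAt_kink t).deriv] at horth
  have hQ := integrable_kinkQuadForm hψ hψ'
  have hψ2 := integral_sq_le_four_mul_integral_kinkFactor_sq hψd hψ hψ' horth
  rw [← integral_kinkQuadForm_eq hψd hψ hψ'] at hψ2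
  have hmono : ∫ t, (deriv ψ t ^ 2 + ψ t ^ 2)
      ≤ ∫ t, ((deriv ψ t ^ 2 - (1 - 3 * kink t ^ 2) * ψ t ^ 2) + 2 * ψ t ^ 2) :=
    integral_mono (hψ'.integrable_sq.add hψ.integrable_sq) (hQ.add (hψ.integrable_sq.const_mul 2))
      fun t => by nlinarith [sq_nonneg (kink t * ψ t)]
  rw [integral_add hQ (hψ.integrable_sq.const_mul 2), integral_const_mul] at hmono
  linarith
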